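/- Let A be an atomic Boolean algebra, V a set, and f : A → ℘(V) a complete representation of A (an injective Boolean homomorphism with f(⊤)=V preserving all existing suprema as unions). Then the map g : ℘(At A) → ℘(V) defined by g(X) = ⋃_{x ∈ X} f(x) is an injective Boolean algebra homomorphism. -/

import Mathlib

/-!
Distinct atoms are disjoint, so under `f` they go to pairwise disjoint nonempty sets, and since
`⊤` is the supremum of the atoms, completeness of `f` makes these sets cover `V`. Hence the images
of the atoms partition `V`: sending each point to the atom whose image contains it gives a
surjection `p : V → At A` with `g X = p ⁻¹' X`, and taking preimages under a surjection is an
injective Boolean homomorphism.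
-/

open Set Function

theorem Set.exists_preimage_singleton_eq_of_pairwise_disjoint {ι V : Type*} {F : ι → Set V}
    (hdisj : Pairwise (Disjoint on F)) (hcover : ⋃ i, F i = univ) :
    ∃ p : V → ι, ∀ i, p ⁻¹' {i} = F i := by
  choose p hp using iUnion_eq_univ_iff.1 hcover
  refine ⟨p, fun i => ext fun v => ⟨?_, fun hv => ?_⟩⟩
  · rintro rfl
    exact hp v
  · by_contra hne
    exact (hdisj hne).ne_of_mem (hp v) hv rfl

theorem isLUB_atoms_top_of_isAtomic {A : Type*} [BooleanAlgebra A] [IsAtomic A] :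
    IsLUB {a : A | IsAtom a} ⊤ := by
  refine ⟨fun _ _ => le_top, fun s hs => ?_⟩
  rcases eq_bot_or_exists_atom_le sᶜ with h | ⟨a, ha, hle⟩
  · exact compl_eq_bot.1 h ▸ le_rfl
  · exact absurd (le_inf (hs ha) hle) (by simpa using ha.1)

section CompleteRepresentation

variable {A V : Type*} [BooleanAlgebra A] {f : A → Set V}

theorem map_bot_eq_empty_of_isLUB (fSup : ∀ (X : Set A) (s : A), IsLUB X s → f s = ⋃ x ∈ X, f x) :
    f ⊥ = ∅ := by
  simpa using fSup ∅ ⊥ isLUB_empty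

theorem pairwise_disjoint_map_atoms (finf : ∀ a b : A, f (a ⊓ b) = f a ∩ f b) (fbot : f ⊥ = ∅) :
    Pairwise (Disjoint on fun x : {x : A // IsAtom x} => f x) := by
  intro x y hxy
  have hxy' : Disjoint (x : A) y := x.2.disjoint_of_ne y.2 (Subtype.coe_ne_coe.2 hxy)
  rw [onFun, disjoint_iff_inter_eq_empty, ← finf, hxy'.eq_bot, fbot]

theorem iUnion_map_atoms_eq_univ [IsAtomic A] (ftop : f ⊤ = univ)
    (fSup : ∀ (X : Set A) (s : A), IsLUB X s → f s = ⋃ x ∈ X, f x) :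
    ⋃ x : {x : A // IsAtom x}, f x = univ := by
  rw [← ftop, fSup _ _ isLUB_atoms_top_of_isAtomic, iUnion_subtype]
  rfl

theorem nonempty_map_atom (finj : Injective f) (fbot : f ⊥ = ∅) {a : A} (ha : IsAtom a) :
    (f a).Nonempty :=
  nonempty_iff_ne_empty.2 fun h => ha.1 (finj (h.trans fbot.symm))

end CompleteRepresentation

theorem stmt5_general (A V : Type*) [BooleanAlgebra A] [IsAtomic A]
    (f : A → Set V)
    (finj : Function.Injective f)
    (finf : ∀ a b : A, f (a ⊓ b) = f a ∩ f b)
    (ftop : f ⊤ = Set.univ)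
    (fSup : ∀ (X : Set A) (s : A), IsLUB X s → f s = ⋃ x ∈ X, f x)
    (g : Set {x : A // IsAtom x} → Set V)
    (hg : ∀ X : Set {x : A // IsAtom x}, g X = ⋃ x ∈ X, f (x : A)) :
    Function.Injective g ∧
    (∀ X Y, g (X ∪ Y) = g X ∪ g Y) ∧
    (∀ X Y, g (X ∩ Y) = g X ∩ g Y) ∧
    (∀ X, g Xᶜ = (g X)ᶜ) ∧
    g ∅ = ∅ ∧ g Set.univ = Set.univ := by
  have fbot := map_bot_eq_empty_of_isLUB fSup
  obtain ⟨p, hp⟩ := exists_preimage_singleton_eq_of_pairwise_disjoint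
    (pairwise_disjoint_map_atoms finf fbot) (iUnion_map_atoms_eq_univ ftop fSup)
  have hgp : g = preimage p := funext fun X => by
    simp only [hg, ← hp, biUnion_preimage_singleton]
  have hpsurj : Surjective p := fun x => by
    obtain ⟨v, hv⟩ := nonempty_map_atom finj fbot x.2
    rw [← hp] at hv
    exact ⟨v, hv⟩
  subst hgp
  exact ⟨preimage_injective.2 hpsurj, fun _ _ => preimage_union, fun _ _ => preimage_inter,
    fun _ => preimage_compl, preimage_empty, preimage_univ⟩

/-- A complete representation `f` of an atomic Boolean algebra `A`
induces an injective Boolean homomorphism `g : ℘(At A) → ℘(V)`,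
`g X = ⋃_{x ∈ X} f x`; i.e. a representation of the completion `Cm(At A)`. -/
theorem stmt5 (A V : Type*) [BooleanAlgebra A] [IsAtomic A]
    (f : A → Set V)
    (finj : Function.Injective f)
    (fsup : ∀ a b : A, f (a ⊔ b) = f a ∪ f b)
    (finf : ∀ a b : A, f (a ⊓ b) = f a ∩ f b)
    (fcompl : ∀ a : A, f aᶜ = (f a)ᶜ)
    (ftop : f ⊤ = Set.univ)
    (fSup : ∀ (X : Set A) (s : A), IsLUB X s → f s = ⋃ x ∈ X, f x)
    (g : Set {x : A // IsAtom x} → Set V)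
    (hg : ∀ X : Set {x : A // IsAtom x}, g X = ⋃ x ∈ X, f (x : A)) :
    Function.Injective g ∧
    (∀ X Y, g (X ∪ Y) = g X ∪ g Y) ∧
    (∀ X Y, g (X ∩ Y) = g X ∩ g Y) ∧
    (∀ X, g Xᶜ = (g X)ᶜ) ∧
    g ∅ = ∅ ∧ g Set.univ = Set.univ :=
  stmt5_general A V f finj finf ftop fSup g hg
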